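/- arXiv:1804.03823 — 2 statements merged into one kernel-verified Lean document; each statement's English description precedes it below -/
import Mathlib

section
/- Let F_x^{(1)}, …, F_x^{(u)} be SGICP fitting matrices and let F_x^E be the jointly extended fitting matrix whose i-th diagonal block is F_x^{(i)} and all of whose off-diagonal entries are unknowns. Then mrk_q(F_x^E) = max_{i∈[u]} mrk_q(F_x^{(i)}). -/
open scoped Classical

/-- `A ≈ F_x`: the matrix `A` completes the fitting matrix of the SGICP with demand map `f`
and side-information sets `χ`, i.e. `A` equals `1` at every demand entry and `0` at every
entry which is neither a demand entry nor a side-information entry. -/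
def Completes {K : Type*} [Field K] {R M : Type*} (f : R → M) (χ : R → Set M)
    (A : Matrix R M K) : Prop :=
  (∀ i, A i (f i) = 1) ∧ ∀ i j, j ≠ f i → j ∉ χ i → A i j = 0

/-- `mrk_q(F_x)`: the minrank over `K` of the SGICP with demand map `f` and side
information `χ` — the minimum rank of a matrix completing its fitting matrix. -/
noncomputable def minrk (K : Type*) [Field K] {R M : Type*} [Fintype M]
    (f : R → M) (χ : R → Set M) : ℕ :=
  sInf {r | ∃ A : Matrix R M K, Completes f χ A ∧ A.rank = r}

/-- The set of achievable ranks is nonempty. -/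
lemma completes_nonempty {K : Type*} [Field K] {R M : Type*} [Fintype M]
    (f : R → M) (χ : R → Set M) :
    {r | ∃ A : Matrix R M K, Completes f χ A ∧ A.rank = r}.Nonempty := by
  refine ⟨_, Matrix.of (fun i j => if j = f i then (1 : K) else 0), ⟨?_, ?_⟩, rfl⟩
  · intro i; simp [Matrix.of_apply]
  · intro i j hj _; simp [Matrix.of_apply, hj]

/-- Rank of an arbitrary submatrix is at most the rank of the matrix. -/
lemma rank_submatrix_le'' {K : Type*} [Field K] {R M R' M' : Type*}
    [Fintype R] [Fintype M] [Fintype M']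
    (A : Matrix R M K) (r : R' → R) (c : M' → M) :
    (A.submatrix r c).rank ≤ A.rank := by
  set P : Matrix R' R K := Matrix.of (fun i' i => if i = r i' then (1 : K) else 0) with hP
  set Q : Matrix M M' K := Matrix.of (fun j j' => if j = c j' then (1 : K) else 0) with hQ
  have hPA : P * A = A.submatrix r id := by
    ext i' j
    simp [Matrix.mul_apply, hP, ite_mul, Finset.sum_ite_eq]
  have hsub : A.submatrix r c = P * A * Q := by
    rw [hPA]
    ext i' j'
    simp [Matrix.mul_apply, hQ, mul_ite, Finset.sum_ite_eq']
  rw [hsub]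
  exact le_trans (Matrix.rank_mul_le_left _ _) (Matrix.rank_mul_le_right _ _)

/-- Rank factorization: a matrix of rank at most `r` factors through `K^r`. -/
lemma exists_factorization {K : Type*} [Field K] {n m : ℕ} (r : ℕ)
    (A : Matrix (Fin n) (Fin m) K) (h : A.rank ≤ r) :
    ∃ (B : Matrix (Fin n) (Fin r) K) (C : Matrix (Fin r) (Fin m) K), A = B * C := by
  classical
  set W := LinearMap.range A.mulVecLin with hW
  have hfin : A.rank = Module.finrank K W := rfl
  set d := Module.finrank K W with hd
  have hdr : d ≤ r := hfin ▸ h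
  let b : Module.Basis (Fin d) K W := Module.finBasis K W
  have hcol : ∀ j : Fin m, (fun i => A i j) ∈ W := by
    intro j
    refine ⟨Pi.single j 1, ?_⟩
    ext i
    simp [Matrix.mulVecLin, Matrix.mulVec, dotProduct, Pi.single_apply]
  let c : Fin d → Fin m → K := fun l j => b.repr ⟨fun i => A i j, hcol j⟩ l
  have key : ∀ (j : Fin m) (i : Fin n),
      ∑ l : Fin d, c l j * ((b l : W) : Fin n → K) i = A i j := by
    intro j i
    have := b.sum_repr ⟨fun i => A i j, hcol j⟩
    have := congrArg (fun (w : W) => (w : Fin n → K) i) this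
    simpa [c, smul_eq_mul, -Module.Basis.sum_repr] using this
  refine ⟨Matrix.of (fun i l => if h : (l : ℕ) < d then ((b ⟨l, h⟩ : W) : Fin n → K) i else 0),
    Matrix.of (fun l j => if h : (l : ℕ) < d then c ⟨l, h⟩ j else 0), ?_⟩
  ext i j
  rw [Matrix.mul_apply]
  have hsum : ∑ l : Fin r,
      (if h : (l : ℕ) < d then ((b ⟨l, h⟩ : W) : Fin n → K) i else 0) *
        (if h : (l : ℕ) < d then c ⟨l, h⟩ j else 0)
      = ∑ l : Fin d, ((b l : W) : Fin n → K) i * c l j := by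
    rw [← Finset.sum_subset (Finset.subset_univ
      ((Finset.univ : Finset (Fin d)).map (Fin.castLEEmb hdr)))]
    · rw [Finset.sum_map]
      apply Finset.sum_congr rfl
      intro l _
      simp [Fin.castLEEmb, Fin.castLE]
    · intro l _ hl
      have : ¬ (l : ℕ) < d := by
        intro hld
        exact hl (Finset.mem_map.2 ⟨⟨l, hld⟩, Finset.mem_univ _, by
          simp [Fin.castLEEmb, Fin.castLE]⟩)
      simp [this]
  simp only [Matrix.of_apply]
  rw [hsum]
  rw [← key j i]
  apply Finset.sum_congr rfl
  intro l _
  ring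

/-- minrank of all-unknown joint extensions.
Let `F_x^(i)` (`i : Fin (u+1)`) be SGICP fitting matrices and let `F_x^E` be the jointly
extended fitting matrix whose `i`-th diagonal block is `F_x^(i)` (hyp `hXdiag`) and all of
whose off-diagonal entries are unknowns (hyp `hXoff`).  Then
`mrk_q(F_x^E) = max_{i} mrk_q(F_x^(i))`. -/
theorem stmt6 (K : Type*) [Field K] [Fintype K]
    (u : ℕ) (nn mm : Fin (u + 1) → ℕ)
    (f : ∀ s, Fin (nn s) → Fin (mm s))
    (χ : ∀ s, Fin (nn s) → Set (Fin (mm s)))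
    (hχ : ∀ s k, f s k ∉ χ s k)
    (X : (Σ s, Fin (nn s)) → Set (Σ s, Fin (mm s)))
    (hXdiag : ∀ s (k : Fin (nn s)) (j : Fin (mm s)),
      (⟨s, j⟩ : Σ s, Fin (mm s)) ∈ X ⟨s, k⟩ ↔ j ∈ χ s k)
    (hXoff : ∀ s t, s ≠ t → ∀ (k : Fin (nn s)) (c : Fin (mm t)),
      (⟨t, c⟩ : Σ s, Fin (mm s)) ∈ X ⟨s, k⟩) :
    minrk K (fun p : Σ s, Fin (nn s) => (⟨p.1, f p.1 p.2⟩ : Σ s, Fin (mm s))) X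
      = Finset.univ.sup fun s => minrk K (f s) (χ s) := by
  classical
  set F : (Σ s, Fin (nn s)) → Σ s, Fin (mm s) :=
    fun p => ⟨p.1, f p.1 p.2⟩ with hF
  set rmax := Finset.univ.sup fun s => minrk K (f s) (χ s) with hrmax
  -- a minimal-rank completion of each block
  have hblock : ∀ s, ∃ A : Matrix (Fin (nn s)) (Fin (mm s)) K,
      Completes (f s) (χ s) A ∧ A.rank = minrk K (f s) (χ s) :=
    fun s => Nat.sInf_mem (completes_nonempty (f s) (χ s))
  choose Ab hAbC hAbR using hblock
  -- factorize each block
  have hfac : ∀ s, ∃ (B : Matrix (Fin (nn s)) (Fin rmax) K)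
      (C : Matrix (Fin rmax) (Fin (mm s)) K), Ab s = B * C := by
    intro s
    apply exists_factorization
    rw [hAbR, hrmax]
    exact Finset.le_sup (f := fun t => minrk K (f t) (χ t)) (Finset.mem_univ s)
  choose B C hBC using hfac
  apply le_antisymm
  · -- minrk of extension ≤ rmax, via the glued matrix B' * C'
    set B' : Matrix (Σ s, Fin (nn s)) (Fin rmax) K :=
      Matrix.of (fun p l => B p.1 p.2 l) with hB'
    set C' : Matrix (Fin rmax) (Σ s, Fin (mm s)) K :=
      Matrix.of (fun l q => C q.1 l q.2) with hC'
    have hdiag : ∀ s (k : Fin (nn s)) (j : Fin (mm s)),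
        (B' * C') ⟨s, k⟩ ⟨s, j⟩ = Ab s k j := by
      intro s k j
      rw [hBC s, Matrix.mul_apply, Matrix.mul_apply]
      rfl
    have hcomp : Completes F X (B' * C') := by
      constructor
      · rintro ⟨s, k⟩
        rw [hF]
        simpa using (hdiag s k (f s k)).trans ((hAbC s).1 k)
      · rintro ⟨s, k⟩ ⟨t, c⟩ hne hnot
        by_cases hst : s = t
        · subst hst
          have hjf : c ≠ f s k := by
            intro hcf; exact hne (by simp [hF, hcf])
          have hjχ : c ∉ χ s k := fun hc => hnot ((hXdiag s k c).2 hc)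
          exact (hdiag s k c).trans ((hAbC s).2 k c hjf hjχ)
        · exact absurd (hXoff s t hst k c) hnot
    have hrank : (B' * C').rank ≤ rmax := by
      refine le_trans (Matrix.rank_mul_le_right _ _) ?_
      simpa using C'.rank_le_card_height
    exact le_trans (Nat.sInf_le ⟨B' * C', hcomp, rfl⟩) hrank
  · -- rmax ≤ minrk of extension: every completion dominates every block minrank
    apply Finset.sup_le
    intro s _
    obtain ⟨A, hA, hAr⟩ := Nat.sInf_mem (completes_nonempty (K := K) F X)
    have hm : minrk K F X = A.rank := hAr.symm
    rw [hm]
    have hsub : Completes (f s) (χ s)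
        (A.submatrix (fun k : Fin (nn s) => (⟨s, k⟩ : Σ s, Fin (nn s)))
          (fun j : Fin (mm s) => (⟨s, j⟩ : Σ s, Fin (mm s)))) := by
      constructor
      · intro k
        exact hA.1 ⟨s, k⟩
      · intro k j hjf hjχ
        apply hA.2 ⟨s, k⟩ ⟨s, j⟩
        · simp [hF]
          intro hj
          exact hjf hj
        · intro hj
          exact hjχ ((hXdiag s k j).1 hj)
    exact le_trans (Nat.sInf_le ⟨_, hsub, rfl⟩) (rank_submatrix_le'' A _ _)
end

section
/- Let I be a TGICP in which every receiver with demand in P_1 ∪ P_2 has P_{12} ⊆ χ_i, and every receiver with demand in P_{12} has P_1 ∪ P_2 ⊆ χ_i (i.e., all interactions between I_1 and I_{12} and between I_2 and I_{12} are fully-participated; this covers Case II-B of the paper with fully-participated interactions). Then l*_q(I) = max{mrk_1 + mrk_2, mrk_{12}}. -/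
open scoped Classical

/-- A two-sender groupcast index coding problem (TGICP) with `m` messages and `n` receivers.
Sender `j` holds the messages indexed by `Mj`, receiver `i` demands message `f i` and has
side information `χ i`; every message is demanded by at least one receiver. -/
structure TGICP (m n : ℕ) where
  /-- indices of the messages available at sender 1 -/
  M1 : Set (Fin m)
  /-- indices of the messages available at sender 2 -/
  M2 : Set (Fin m)
  cover : M1 ∪ M2 = Set.univ
  /-- demand map -/
  f : Fin n → Fin m
  /-- side-information sets -/
  χ : Fin n → Set (Fin m)
  not_mem : ∀ i, f i ∉ χ i
  surj : ∀ j, ∃ i, f i = j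

namespace TGICP

variable {m n : ℕ}

/-- `(G1, G2)` is a valid scalar linear two-sender index code over `K`: each receiver can
decode its demanded message from the two transmitted codewords together with its side
information. -/
def IsCode (I : TGICP m n) (K : Type*) [Field K] {l1 l2 : ℕ}
    (G1 : Matrix (Fin l1) ↥I.M1 K) (G2 : Matrix (Fin l2) ↥I.M2 K) : Prop :=
  ∀ i : Fin n, ∃ D : (Fin l1 → K) → (Fin l2 → K) → (↥(I.χ i) → K) → K,
    ∀ x : Fin m → K,
      D (G1.mulVec fun j => x j.1) (G2.mulVec fun j => x j.1) (fun j => x j.1) = x (I.f i)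

/-- `l*_q(I)`: the optimal (minimum) aggregate length of a scalar linear two-sender index
code for `I` over `K`. -/
noncomputable def optLen (I : TGICP m n) (K : Type*) [Field K] : ℕ :=
  sInf {L | ∃ (l1 l2 : ℕ) (G1 : Matrix (Fin l1) ↥I.M1 K) (G2 : Matrix (Fin l2) ↥I.M2 K),
    I.IsCode K G1 G2 ∧ L = l1 + l2}

/-- The minrank over `K` of the single-sender sub-problem of `I` with message set `P`:
its receivers are those demanding a message in `P`, with side information restricted
to `P`. -/
noncomputable def mrk (I : TGICP m n) (K : Type*) [Field K] (P : Set (Fin m)) : ℕ :=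
  minrk K (fun i : {i : Fin n // I.f i ∈ P} => (⟨I.f i.1, i.2⟩ : ↥P))
    (fun i => {j : ↥P | j.1 ∈ I.χ i.1})

end TGICP

section Helpers

variable {K : Type*} [Field K]

lemma sum_subtype_eq {m : ℕ} (P : Set (Fin m)) [Fintype ↥P] (g : ↥P → K) :
    (∑ j : ↥P, g j) = ∑ j : Fin m, (if h : j ∈ P then g ⟨j, h⟩ else 0) := by
  have h1 : (∑ j : ↥P, g j) = ∑ j ∈ P.toFinset, (if h : j ∈ P then g ⟨j, h⟩ else 0) := by
    rw [← Finset.sum_set_coe]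
    exact Finset.sum_congr rfl fun j _ => by rw [dif_pos j.2]
  rw [h1]
  exact Finset.sum_subset (Finset.subset_univ _) fun j _ hj => by
    rw [dif_neg (by simpa using hj)]

lemma dite_sum {c : Prop} [Decidable c] {α : Type*} [Fintype α] (F : c → α → K) :
    (if h : c then ∑ a, F h a else 0) = ∑ a, if h : c then F h a else 0 := by
  split <;> simp_all

lemma exists_coeffs {E : Type*} [AddCommGroup E] [Module K E] {ι : Type*} [Fintype ι]
    (L : ι → E →ₗ[K] K) (g : E →ₗ[K] K) (h : ∀ x, (∀ s, L s x = 0) → g x = 0) :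
    ∃ c : ι → K, ∑ s, c s • L s = g := by
  have hm : g ∈ Submodule.span K (Set.range L) := by
    apply mem_span_of_iInf_ker_le_ker
    intro x hx
    simp only [Submodule.mem_iInf, LinearMap.mem_ker] at hx ⊢
    exact h x hx
  exact (Submodule.mem_span_range_iff_exists_fun K).1 hm

lemma minrk_le_rank {R M : Type*} [Fintype M] (f : R → M) (χ : R → Set M)
    (A : Matrix R M K) (hA : Completes f χ A) : minrk K f χ ≤ A.rank :=
  Nat.sInf_le ⟨A, hA, rfl⟩

lemma exists_completes_rank_eq {R M : Type*} [Fintype M] (f : R → M) (χ : R → Set M) :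
    ∃ A : Matrix R M K, Completes f χ A ∧ A.rank = minrk K f χ := by
  have hne : {r | ∃ A : Matrix R M K, Completes f χ A ∧ A.rank = r}.Nonempty := by
    refine ⟨_, (fun i j => if j = f i then (1 : K) else 0 : Matrix R M K),
      ⟨fun i => if_pos rfl, fun i j hne _ => if_neg hne⟩, rfl⟩
  exact Nat.sInf_mem hne

lemma sum_dite_fin_lt {β : Type*} [AddCommMonoid β] {d r : ℕ} (hdr : d ≤ r) (F : Fin d → β) :
    (∑ s : Fin r, if h : s.1 < d then F ⟨s.1, h⟩ else 0) = ∑ s : Fin d, F s := by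
  symm
  calc ∑ s : Fin d, F s
      = ∑ s : Fin d, (fun t : Fin r => if h : t.1 < d then F ⟨t.1, h⟩ else 0)
          ((Fin.castLEEmb hdr) s) := by
        refine Finset.sum_congr rfl fun s _ => ?_
        have hs : ((Fin.castLEEmb hdr) s).1 < d := by simpa using s.2
        dsimp only
        rw [dif_pos hs]
        exact congrArg F (Fin.ext (by simp))
    _ = ∑ t ∈ Finset.univ.map (Fin.castLEEmb hdr),
          (if h : t.1 < d then F ⟨t.1, h⟩ else 0) := by rw [Finset.sum_map]
    _ = ∑ t : Fin r, (if h : t.1 < d then F ⟨t.1, h⟩ else 0) := by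
        refine Finset.sum_subset (Finset.subset_univ _) fun t _ ht => ?_
        rw [dif_neg]
        intro h
        exact ht (Finset.mem_map.2 ⟨⟨t.1, h⟩, Finset.mem_univ _, Fin.ext rfl⟩)

lemma row_factor {R M : Type*} [Fintype M] [Fintype R] (A : Matrix R M K) {r : ℕ}
    (h : A.rank ≤ r) : ∃ (B : Matrix (Fin r) M K) (c : R → Fin r → K),
    ∀ i, A i = ∑ s, c i s • B s := by
  set W := Submodule.span K (Set.range A) with hW
  have hd : Module.finrank K W ≤ r := by
    rw [Matrix.rank_eq_finrank_span_row] at h; exact h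
  let b := Module.finBasis K W
  refine ⟨fun s => if h' : s.1 < Module.finrank K W then (b ⟨s.1, h'⟩ : M → K) else 0,
    fun i s => if h' : s.1 < Module.finrank K W then
      b.repr ⟨A i, Submodule.subset_span (Set.mem_range_self i)⟩ ⟨s.1, h'⟩ else 0, ?_⟩
  intro i
  have hmem : A i ∈ W := Submodule.subset_span (Set.mem_range_self i)
  let F : Fin (Module.finrank K W) → M → K := fun u => b.repr ⟨A i, hmem⟩ u • (b u : M → K)
  have hsum : ∀ s : Fin r,
      (if h' : s.1 < Module.finrank K W then
        b.repr ⟨A i, Submodule.subset_span (Set.mem_range_self i)⟩ ⟨s.1, h'⟩ else 0)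
      • (if h' : s.1 < Module.finrank K W then (b ⟨s.1, h'⟩ : M → K) else 0)
      = if h' : s.1 < Module.finrank K W then F ⟨s.1, h'⟩ else 0 := by
    intro s; split <;> simp [F]
  have key := sum_dite_fin_lt (β := M → K) hd F
  have h3 : A i = ∑ u, F u := by
    have h2 := congrArg (Subtype.val : W → (M → K)) (b.sum_repr ⟨A i, hmem⟩)
    rw [Submodule.coe_sum] at h2
    simp only [Submodule.coe_smul] at h2
    exact h2.symm
  rw [h3, ← key]
  exact Finset.sum_congr rfl fun s _ => (hsum s).symm

lemma decode_core {m n : ℕ} {f : Fin n → Fin m} {χ : Fin n → Set (Fin m)}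
    (hχ : ∀ i, f i ∉ χ i) {P : Set (Fin m)} {r : ℕ}
    {A : Matrix {i : Fin n // f i ∈ P} ↥P K} {B : Matrix (Fin r) ↥P K}
    {c : {i : Fin n // f i ∈ P} → Fin r → K}
    (hA : Completes (fun i : {i : Fin n // f i ∈ P} => (⟨f i.1, i.2⟩ : ↥P))
      (fun i => {j : ↥P | j.1 ∈ χ i.1}) A)
    (hc : ∀ i, A i = ∑ s, c i s • B s) (i : {i : Fin n // f i ∈ P}) (x : Fin m → K) :
    (∑ s : Fin r, c i s * ∑ j : ↥P, B s j * x j.1)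
      - (∑ j : ↥P, if h : j.1 ∈ χ i.1 then A i j * x j.1 else 0) = x (f i.1) := by
  have h1 : (∑ s : Fin r, c i s * ∑ j : ↥P, B s j * x j.1) = ∑ j : ↥P, A i j * x j.1 := by
    calc ∑ s : Fin r, c i s * ∑ j : ↥P, B s j * x j.1
        = ∑ s : Fin r, ∑ j : ↥P, c i s * (B s j * x j.1) := by
          exact Finset.sum_congr rfl fun s _ => Finset.mul_sum _ _ _
      _ = ∑ j : ↥P, ∑ s : Fin r, c i s * (B s j * x j.1) := Finset.sum_comm
      _ = ∑ j : ↥P, A i j * x j.1 := by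
          refine Finset.sum_congr rfl fun j _ => ?_
          have : A i j = ∑ s, c i s * B s j := by
            rw [hc i]; simp [Finset.sum_apply]
          rw [this, Finset.sum_mul]
          exact Finset.sum_congr rfl fun s _ => (mul_assoc _ _ _).symm
  rw [h1, ← Finset.sum_sub_distrib]
  rw [Finset.sum_eq_single (⟨f i.1, i.2⟩ : ↥P)]
  · rw [hA.1 i, one_mul, dif_neg (hχ i.1), sub_zero]
  · intro j _ hne
    by_cases h : j.1 ∈ χ i.1
    · rw [dif_pos h, sub_self]
    · rw [hA.2 i j hne h, dif_neg h, zero_mul, sub_zero]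
  · intro habs
    exact absurd (Finset.mem_univ _) habs

lemma decode_core' {m n : ℕ} {f : Fin n → Fin m} {χ : Fin n → Set (Fin m)}
    (hχ : ∀ i, f i ∉ χ i) {P : Set (Fin m)} {r : ℕ}
    {A : Matrix {i : Fin n // f i ∈ P} ↥P K} {B : Matrix (Fin r) ↥P K}
    {c : {i : Fin n // f i ∈ P} → Fin r → K}
    (hA : Completes (fun i : {i : Fin n // f i ∈ P} => (⟨f i.1, i.2⟩ : ↥P))
      (fun i => {j : ↥P | j.1 ∈ χ i.1}) A)
    (hc : ∀ i, A i = ∑ s, c i s • B s) (i : {i : Fin n // f i ∈ P}) (x : Fin m → K) :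
    (∑ s : Fin r, c i s * ∑ j : Fin m, (if h : j ∈ P then B s ⟨j, h⟩ * x j else 0))
      - (∑ j : Fin m, if hq : j ∈ P then
          (if h : j ∈ χ i.1 then A i ⟨j, hq⟩ * x j else 0) else 0) = x (f i.1) := by
  have e1 : ∀ s : Fin r, (∑ j : Fin m, (if h : j ∈ P then B s ⟨j, h⟩ * x j else 0))
      = ∑ j : ↥P, B s j * x j.1 := fun s =>
    (sum_subtype_eq P (fun j : ↥P => B s j * x j.1)).symm
  have e2 : (∑ j : Fin m, if hq : j ∈ P then
        (if h : j ∈ χ i.1 then A i ⟨j, hq⟩ * x j else 0) else 0)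
      = ∑ j : ↥P, (if h : j.1 ∈ χ i.1 then A i j * x j.1 else 0) :=
    (sum_subtype_eq P (fun j : ↥P => if h : j.1 ∈ χ i.1 then A i j * x j.1 else 0)).symm
  simp only [e1]
  rw [e2]
  exact decode_core hχ hA hc i x

lemma exists_code_pieces {m n : ℕ} (f : Fin n → Fin m) (χ : Fin n → Set (Fin m))
    (P : Set (Fin m)) {r : ℕ}
    (hr : minrk K (fun i : {i : Fin n // f i ∈ P} => (⟨f i.1, i.2⟩ : ↥P))
      (fun i => {j : ↥P | j.1 ∈ χ i.1}) ≤ r) :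
    ∃ (A : Matrix {i : Fin n // f i ∈ P} ↥P K) (B : Matrix (Fin r) ↥P K)
      (c : {i : Fin n // f i ∈ P} → Fin r → K),
      Completes (fun i : {i : Fin n // f i ∈ P} => (⟨f i.1, i.2⟩ : ↥P))
        (fun i => {j : ↥P | j.1 ∈ χ i.1}) A ∧
      ∀ i, A i = ∑ s, c i s • B s := by
  obtain ⟨A, hc, hr'⟩ := exists_completes_rank_eq (K := K)
    (f := fun i : {i : Fin n // f i ∈ P} => (⟨f i.1, i.2⟩ : ↥P))
    (χ := fun i => {j : ↥P | j.1 ∈ χ i.1})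
  obtain ⟨B, c, hB⟩ := row_factor A (hr'.le.trans hr)
  exact ⟨A, B, c, hc, hB⟩

lemma mrk_le_of_dec {m n : ℕ} (f : Fin n → Fin m) (χ : Fin n → Set (Fin m))
    (hχ : ∀ i, f i ∉ χ i) (P : Set (Fin m)) {l : ℕ} (ρ : Fin l → ↥P → K)
    (hdec : ∀ (i : {i : Fin n // f i ∈ P}) (x : ↥P → K),
      (∀ j : ↥P, j.1 ∈ χ i.1 → x j = 0) →
      (∀ t, ∑ j : Fin m, (if h : j ∈ P then ρ t ⟨j, h⟩ * x ⟨j, h⟩ else 0) = 0) →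
      x ⟨f i.1, i.2⟩ = 0) :
    minrk K (fun i : {i : Fin n // f i ∈ P} => (⟨f i.1, i.2⟩ : ↥P))
      (fun i => {j : ↥P | j.1 ∈ χ i.1}) ≤ l := by
  have key : ∀ i : {i : Fin n // f i ∈ P},
      ∃ c : (Fin l ⊕ {j : ↥P // j.1 ∈ χ i.1}) → K,
      ∑ s, c s • (Sum.elim
          (fun t => ∑ j, ρ t j • LinearMap.proj (R := K) (φ := fun _ : ↥P => K) j)
          (fun j => LinearMap.proj j.1) s)
        = LinearMap.proj (⟨f i.1, i.2⟩ : ↥P) := by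
    intro i
    apply exists_coeffs
    intro x hx
    refine hdec i x (fun j hj => ?_) (fun t => ?_)
    · simpa using hx (Sum.inr ⟨⟨j, j.2⟩, hj⟩)
    · have h0 : ∑ j : ↥P, ρ t j * x j = 0 := by simpa using hx (Sum.inl t)
      exact (sum_subtype_eq P (fun j : ↥P => ρ t j * x j)).symm.trans h0
  choose c hc using key
  set A : Matrix {i : Fin n // f i ∈ P} ↥P K :=
    fun i j => ∑ t, c i (Sum.inl t) * ρ t j with hAdef
  have happ : ∀ (i : {i : Fin n // f i ∈ P}) (j : ↥P),
      A i j + ∑ s : {j : ↥P // j.1 ∈ χ i.1}, c i (Sum.inr s) * (Pi.single j (1:K) : ↥P → K) s.1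
        = (Pi.single j (1:K) : ↥P → K) ⟨f i.1, i.2⟩ := by
    intro i j
    have he := LinearMap.congr_fun (hc i) (Pi.single j (1 : K))
    simpa [Fintype.sum_sum_type, Finset.mul_sum, hAdef, Pi.single_apply, mul_ite,
      Finset.sum_ite_eq'] using he
  have hcomp : Completes (fun i : {i : Fin n // f i ∈ P} => (⟨f i.1, i.2⟩ : ↥P))
      (fun i => {j : ↥P | j.1 ∈ χ i.1}) A := by
    constructor
    · intro i
      have := happ i ⟨f i.1, i.2⟩
      have hz : ∀ s : {j : ↥P // j.1 ∈ χ i.1},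
          c i (Sum.inr s) * (Pi.single (⟨f i.1, i.2⟩ : ↥P) (1:K) : ↥P → K) s.1 = 0 := by
        intro s
        have : s.1 ≠ (⟨f i.1, i.2⟩ : ↥P) := by
          intro h
          apply hχ i.1
          have h2 := s.2
          rw [h] at h2
          exact h2
        simp [Pi.single_apply, this]
      rw [Finset.sum_congr rfl (fun s _ => hz s)] at this
      simpa using this
    · intro i j hne hnotin
      have := happ i j
      have hz : ∀ s : {j : ↥P // j.1 ∈ χ i.1},
          c i (Sum.inr s) * (Pi.single j (1:K) : ↥P → K) s.1 = 0 := by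
        intro s
        have : s.1 ≠ j := fun h => hnotin (h ▸ s.2)
        simp [Pi.single_apply, this]
      rw [Finset.sum_congr rfl (fun s _ => hz s)] at this
      have hj : (⟨f i.1, i.2⟩ : ↥P) ≠ j := fun h => hne h.symm
      simpa [Pi.single_apply, fun h : j = (⟨f i.1, i.2⟩ : ↥P) => hne h] using this
  have hfac : A = (Matrix.of fun i t => c i (Sum.inl t)) * (Matrix.of fun t j => ρ t j) := by
    ext i j
    rw [Matrix.mul_apply]
    rfl
  have hrank : A.rank ≤ l := by
    calc A.rank ≤ (Matrix.of fun t j => ρ t j).rank := by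
          rw [hfac]; exact Matrix.rank_mul_le_right _ _
      _ ≤ Fintype.card (Fin l) := Matrix.rank_le_card_height _
      _ = l := Fintype.card_fin l
  exact le_trans (minrk_le_rank _ _ A hcomp) hrank

end Helpers

/-- Case II-B, fully-participated interactions.
Let `I` be a TGICP in which every receiver with demand in `P_1 ∪ P_2` has `P_{12} ⊆ χ_i`,
and every receiver with demand in `P_{12}` has `P_1 ∪ P_2 ⊆ χ_i`.  Then
`l*_q(I) = max (mrk_1 + mrk_2) mrk_{12}`. -/
theorem stmt9 (K : Type*) [Field K] [Fintype K] {m n : ℕ} (I : TGICP m n)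
    (h1 : ∀ i, I.f i ∈ (I.M1 \ I.M2) ∪ (I.M2 \ I.M1) → I.M1 ∩ I.M2 ⊆ I.χ i)
    (h2 : ∀ i, I.f i ∈ I.M1 ∩ I.M2 → (I.M1 \ I.M2) ∪ (I.M2 \ I.M1) ⊆ I.χ i) :
    I.optLen K =
      max (I.mrk K (I.M1 \ I.M2) + I.mrk K (I.M2 \ I.M1)) (I.mrk K (I.M1 ∩ I.M2)) := by
  classical
  set P1 := I.M1 \ I.M2 with hP1
  set P2 := I.M2 \ I.M1 with hP2
  set P12 := I.M1 ∩ I.M2 with hP12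
  set S : Set ℕ := {L | ∃ (l1 l2 : ℕ) (G1 : Matrix (Fin l1) ↥I.M1 K)
    (G2 : Matrix (Fin l2) ↥I.M2 K), I.IsCode K G1 G2 ∧ L = l1 + l2} with hS
  have hconv : ∀ L ∈ S, max (I.mrk K P1 + I.mrk K P2) (I.mrk K P12) ≤ L := by
    rintro L ⟨l1, l2, G1, G2, hcode, rfl⟩
    have heval : ∀ (i : Fin n) (x : Fin m → K),
        ((G1.mulVec fun j : ↥I.M1 => x j.1) = 0) →
        ((G2.mulVec fun j : ↥I.M2 => x j.1) = 0) →
        (∀ j : ↥(I.χ i), x j.1 = 0) → x (I.f i) = 0 := by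
      intro i x hx1 hx2 hxs
      obtain ⟨D, hD⟩ := hcode i
      have e1 := hD x
      have e0 := hD 0
      have hs : (fun j : ↥(I.χ i) => x j.1) = (fun j : ↥(I.χ i) => (0 : Fin m → K) j.1) :=
        funext fun j => hxs j
      have hz1 : (G1.mulVec fun j : ↥I.M1 => (0 : Fin m → K) j.1) = 0 := by
        show G1.mulVec (fun _ => 0) = 0
        rw [show (fun _ : ↥I.M1 => (0:K)) = (0 : ↥I.M1 → K) from rfl, Matrix.mulVec_zero]
      have hz2 : (G2.mulVec fun j : ↥I.M2 => (0 : Fin m → K) j.1) = 0 := by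
        show G2.mulVec (fun _ => 0) = 0
        rw [show (fun _ : ↥I.M2 => (0:K)) = (0 : ↥I.M2 → K) from rfl, Matrix.mulVec_zero]
      rw [hx1, hx2, hs] at e1
      rw [hz1, hz2] at e0
      have := e1.symm.trans e0
      simpa using this
    have hb1 : I.mrk K P1 ≤ l1 := by
      refine mrk_le_of_dec I.f I.χ I.not_mem P1
        (ρ := fun t (j : ↥P1) => G1 t ⟨j.1, j.2.1⟩) ?_
      intro i x hx0 hρ
      set xb : Fin m → K := fun j => if h : j ∈ P1 then x ⟨j, h⟩ else 0 with hxb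
      have h1 : (G1.mulVec fun j : ↥I.M1 => xb j.1) = 0 := by
        funext t
        show ∑ j : ↥I.M1, G1 t j * xb j.1 = 0
        refine Eq.trans ?_ (hρ t)
        rw [sum_subtype_eq I.M1]
        refine Finset.sum_congr rfl fun j _ => ?_
        by_cases hq : j ∈ P1
        · rw [dif_pos hq.1, dif_pos hq]
          show G1 t ⟨j, hq.1⟩ * (if h : j ∈ P1 then x ⟨j, h⟩ else 0)
            = G1 t ⟨j, hq.1⟩ * x ⟨j, hq⟩
          rw [dif_pos hq]
        · rw [dif_neg hq]
          by_cases hm1 : j ∈ I.M1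
          · rw [dif_pos hm1]
            show G1 t ⟨j, hm1⟩ * (if h : j ∈ P1 then x ⟨j, h⟩ else 0) = 0
            rw [dif_neg hq, mul_zero]
          · rw [dif_neg hm1]
      have h2 : (G2.mulVec fun j : ↥I.M2 => xb j.1) = 0 := by
        funext s
        show ∑ j : ↥I.M2, G2 s j * xb j.1 = 0
        refine Finset.sum_eq_zero fun j _ => ?_
        have hz : xb j.1 = 0 := by
          show (if h : j.1 ∈ P1 then x ⟨j.1, h⟩ else 0) = 0
          rw [dif_neg (fun h : j.1 ∈ P1 => h.2 j.2)]
        rw [hz, mul_zero]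
      have h3 : ∀ j : ↥(I.χ i.1), xb j.1 = 0 := by
        intro j
        show (if h : j.1 ∈ P1 then x ⟨j.1, h⟩ else 0) = 0
        by_cases hq : j.1 ∈ P1
        · rw [dif_pos hq]; exact hx0 ⟨j.1, hq⟩ j.2
        · rw [dif_neg hq]
      have hfin := heval i.1 xb h1 h2 h3
      have : xb (I.f i.1) = x ⟨I.f i.1, i.2⟩ := by
        show (if h : I.f i.1 ∈ P1 then x ⟨I.f i.1, h⟩ else 0) = _
        rw [dif_pos i.2]
      rwa [this] at hfin
    have hb2 : I.mrk K P2 ≤ l2 := by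
      refine mrk_le_of_dec I.f I.χ I.not_mem P2
        (ρ := fun s (j : ↥P2) => G2 s ⟨j.1, j.2.1⟩) ?_
      intro i x hx0 hρ
      set xb : Fin m → K := fun j => if h : j ∈ P2 then x ⟨j, h⟩ else 0 with hxb
      have h1 : (G1.mulVec fun j : ↥I.M1 => xb j.1) = 0 := by
        funext t
        show ∑ j : ↥I.M1, G1 t j * xb j.1 = 0
        refine Finset.sum_eq_zero fun j _ => ?_
        have hz : xb j.1 = 0 := by
          show (if h : j.1 ∈ P2 then x ⟨j.1, h⟩ else 0) = 0
          rw [dif_neg (fun h : j.1 ∈ P2 => h.2 j.2)]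
        rw [hz, mul_zero]
      have h2 : (G2.mulVec fun j : ↥I.M2 => xb j.1) = 0 := by
        funext s
        show ∑ j : ↥I.M2, G2 s j * xb j.1 = 0
        refine Eq.trans ?_ (hρ s)
        rw [sum_subtype_eq I.M2]
        refine Finset.sum_congr rfl fun j _ => ?_
        by_cases hq : j ∈ P2
        · rw [dif_pos hq.1, dif_pos hq]
          show G2 s ⟨j, hq.1⟩ * (if h : j ∈ P2 then x ⟨j, h⟩ else 0)
            = G2 s ⟨j, hq.1⟩ * x ⟨j, hq⟩
          rw [dif_pos hq]
        · rw [dif_neg hq]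
          by_cases hm2 : j ∈ I.M2
          · rw [dif_pos hm2]
            show G2 s ⟨j, hm2⟩ * (if h : j ∈ P2 then x ⟨j, h⟩ else 0) = 0
            rw [dif_neg hq, mul_zero]
          · rw [dif_neg hm2]
      have h3 : ∀ j : ↥(I.χ i.1), xb j.1 = 0 := by
        intro j
        show (if h : j.1 ∈ P2 then x ⟨j.1, h⟩ else 0) = 0
        by_cases hq : j.1 ∈ P2
        · rw [dif_pos hq]; exact hx0 ⟨j.1, hq⟩ j.2
        · rw [dif_neg hq]
      have hfin := heval i.1 xb h1 h2 h3
      have : xb (I.f i.1) = x ⟨I.f i.1, i.2⟩ := by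
        show (if h : I.f i.1 ∈ P2 then x ⟨I.f i.1, h⟩ else 0) = _
        rw [dif_pos i.2]
      rwa [this] at hfin
    have hb12 : I.mrk K P12 ≤ l1 + l2 := by
      refine mrk_le_of_dec I.f I.χ I.not_mem P12
        (ρ := fun (t : Fin (l1 + l2)) (j : ↥P12) =>
          if h : t.1 < l1 then G1 ⟨t.1, h⟩ ⟨j.1, j.2.1⟩
          else G2 ⟨t.1 - l1, by have := t.2; omega⟩ ⟨j.1, j.2.2⟩) ?_
      intro i x hx0 hρ
      set xb : Fin m → K := fun j => if h : j ∈ P12 then x ⟨j, h⟩ else 0 with hxb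
      have h1 : (G1.mulVec fun j : ↥I.M1 => xb j.1) = 0 := by
        funext t
        show ∑ j : ↥I.M1, G1 t j * xb j.1 = 0
        have ht : t.1 < l1 + l2 := by have := t.2; omega
        refine Eq.trans ?_ (hρ ⟨t.1, ht⟩)
        rw [sum_subtype_eq I.M1]
        refine Finset.sum_congr rfl fun j _ => ?_
        by_cases hq : j ∈ P12
        · rw [dif_pos hq.1, dif_pos hq]
          beta_reduce
          rw [dif_pos (show ((⟨t.1, ht⟩ : Fin (l1 + l2))).1 < l1 from t.2)]
          rw [show xb j = x ⟨j, hq⟩ from by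
            show (if h : j ∈ P12 then x ⟨j, h⟩ else 0) = _; rw [dif_pos hq]]
        · rw [dif_neg hq]
          by_cases hm1 : j ∈ I.M1
          · rw [dif_pos hm1]
            show G1 t ⟨j, hm1⟩ * (if h : j ∈ P12 then x ⟨j, h⟩ else 0) = 0
            rw [dif_neg hq, mul_zero]
          · rw [dif_neg hm1]
      have h2 : (G2.mulVec fun j : ↥I.M2 => xb j.1) = 0 := by
        funext s
        show ∑ j : ↥I.M2, G2 s j * xb j.1 = 0
        have ht : l1 + s.1 < l1 + l2 := by have := s.2; omega
        refine Eq.trans ?_ (hρ ⟨l1 + s.1, ht⟩)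
        rw [sum_subtype_eq I.M2]
        refine Finset.sum_congr rfl fun j _ => ?_
        by_cases hq : j ∈ P12
        · rw [dif_pos hq.2, dif_pos hq]
          beta_reduce
          rw [dif_neg (show ¬ ((⟨l1 + s.1, ht⟩ : Fin (l1 + l2))).1 < l1 from
            Nat.not_lt.2 (Nat.le_add_right l1 s.1))]
          rw [show xb j = x ⟨j, hq⟩ from by
            show (if h : j ∈ P12 then x ⟨j, h⟩ else 0) = _; rw [dif_pos hq]]
          exact congrArg (fun u => G2 u ⟨j, hq.2⟩ * x ⟨j, hq⟩) (Fin.ext (by simp))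
        · rw [dif_neg hq]
          by_cases hm2 : j ∈ I.M2
          · rw [dif_pos hm2]
            show G2 s ⟨j, hm2⟩ * (if h : j ∈ P12 then x ⟨j, h⟩ else 0) = 0
            rw [dif_neg hq, mul_zero]
          · rw [dif_neg hm2]
      have h3 : ∀ j : ↥(I.χ i.1), xb j.1 = 0 := by
        intro j
        show (if h : j.1 ∈ P12 then x ⟨j.1, h⟩ else 0) = 0
        by_cases hq : j.1 ∈ P12
        · rw [dif_pos hq]; exact hx0 ⟨j.1, hq⟩ j.2
        · rw [dif_neg hq]
      have hfin := heval i.1 xb h1 h2 h3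
      have : xb (I.f i.1) = x ⟨I.f i.1, i.2⟩ := by
        show (if h : I.f i.1 ∈ P12 then x ⟨I.f i.1, h⟩ else 0) = _
        rw [dif_pos i.2]
      rwa [this] at hfin
    exact max_le (le_trans (add_le_add hb1 hb2) le_rfl) (le_trans hb12 le_rfl)
  have hach : max (I.mrk K P1 + I.mrk K P2) (I.mrk K P12) ∈ S := by
    obtain ⟨Q1, hQ1⟩ : ∃ Q : Set (Fin m), Q = I.M1 \ I.M2 := ⟨_, rfl⟩
    obtain ⟨Q2, hQ2⟩ : ∃ Q : Set (Fin m), Q = I.M2 \ I.M1 := ⟨_, rfl⟩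
    obtain ⟨Q12, hQ12⟩ : ∃ Q : Set (Fin m), Q = I.M1 ∩ I.M2 := ⟨_, rfl⟩
    have hmr1 : I.mrk K P1 = I.mrk K Q1 := congrArg _ (hP1.trans hQ1.symm)
    have hmr2 : I.mrk K P2 = I.mrk K Q2 := congrArg _ (hP2.trans hQ2.symm)
    have hmr12 : I.mrk K P12 = I.mrk K Q12 := congrArg _ (hP12.trans hQ12.symm)
    rw [hmr1, hmr2, hmr12]
    set r1 := I.mrk K Q1 with hr1d
    set r2 := I.mrk K Q2 with hr2d
    set r12 := I.mrk K Q12 with hr12d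
    -- membership helpers
    have hmem1 : ∀ {j : Fin m}, j ∈ I.M1 → j ∉ I.M2 → j ∈ Q1 := fun ha hb => by
      rw [hQ1]; exact ⟨ha, hb⟩
    have hmem2 : ∀ {j : Fin m}, j ∈ I.M2 → j ∉ I.M1 → j ∈ Q2 := fun ha hb => by
      rw [hQ2]; exact ⟨ha, hb⟩
    have hmem12 : ∀ {j : Fin m}, j ∈ I.M1 → j ∈ I.M2 → j ∈ Q12 := fun ha hb => by
      rw [hQ12]; exact ⟨ha, hb⟩
    have hQ1sub : ∀ {j : Fin m}, j ∈ Q1 → j ∈ I.M1 ∧ j ∉ I.M2 := fun h => by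
      rw [hQ1] at h; exact h
    have hQ2sub : ∀ {j : Fin m}, j ∈ Q2 → j ∈ I.M2 ∧ j ∉ I.M1 := fun h => by
      rw [hQ2] at h; exact h
    have hQ12sub : ∀ {j : Fin m}, j ∈ Q12 → j ∈ I.M1 ∧ j ∈ I.M2 := fun h => by
      rw [hQ12] at h; exact h
    -- side-information helpers
    have hside1 : ∀ (i : Fin n), I.f i ∈ I.M1 → I.f i ∉ I.M2 →
        ∀ {j : Fin m}, j ∈ Q12 → j ∈ I.χ i := fun i ha hb {j} hj =>
      h1 i (Or.inl ⟨ha, hb⟩) (by rw [hQ12] at hj; exact hj)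
    have hside2 : ∀ (i : Fin n), I.f i ∈ I.M2 → I.f i ∉ I.M1 →
        ∀ {j : Fin m}, j ∈ Q12 → j ∈ I.χ i := fun i ha hb {j} hj =>
      h1 i (Or.inr ⟨ha, hb⟩) (by rw [hQ12] at hj; exact hj)
    have hside12a : ∀ (i : Fin n), I.f i ∈ I.M1 → I.f i ∈ I.M2 →
        ∀ {j : Fin m}, j ∈ Q1 → j ∈ I.χ i := fun i ha hb {j} hj =>
      h2 i ⟨ha, hb⟩ (Or.inl (by rw [hQ1] at hj; exact hj))
    have hside12b : ∀ (i : Fin n), I.f i ∈ I.M1 → I.f i ∈ I.M2 →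
        ∀ {j : Fin m}, j ∈ Q2 → j ∈ I.χ i := fun i ha hb {j} hj =>
      h2 i ⟨ha, hb⟩ (Or.inr (by rw [hQ2] at hj; exact hj))
    -- pieces for the three sub-problems
    obtain ⟨A1, B1, c1, hA1c, hB1⟩ := exists_code_pieces (K := K) I.f I.χ Q1
      (r := r1) (le_of_eq rfl)
    obtain ⟨A2, B2, c2, hA2c, hB2⟩ := exists_code_pieces (K := K) I.f I.χ Q2
      (r := r2) (le_of_eq rfl)
    obtain ⟨A12, B12, c12, hA12c, hB12⟩ := exists_code_pieces (K := K) I.f I.χ Q12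
      (r := r12) (le_of_eq rfl)
    -- lengths
    set L0 := max (r1 + r2) r12 with hL0
    set l1 := L0 - r2 with hl1
    have h_r2L : r2 ≤ L0 := le_trans (Nat.le_add_left _ _) (le_max_left _ _)
    have h_sum : l1 + r2 = L0 := Nat.sub_add_cancel h_r2L
    have h_r1l1 : r1 ≤ l1 := by have := le_max_left (r1 + r2) r12; omega
    have h_r12 : r12 ≤ l1 + r2 := by have := le_max_right (r1 + r2) r12; omega
    -- the encoding matrices
    set G1 : Matrix (Fin l1) ↥I.M1 K := Matrix.of (fun t (j : ↥I.M1) =>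
      if h2m : j.1 ∈ I.M2 then
        (if ht : t.1 < r12 then B12 ⟨t.1, ht⟩ ⟨j.1, hmem12 j.2 h2m⟩ else 0)
      else
        (if ht : t.1 < r1 then B1 ⟨t.1, ht⟩ ⟨j.1, hmem1 j.2 h2m⟩ else 0)) with hG1
    set G2 : Matrix (Fin r2) ↥I.M2 K := Matrix.of (fun s (j : ↥I.M2) =>
      if h1m : j.1 ∈ I.M1 then
        (if hs : l1 + s.1 < r12 then B12 ⟨l1 + s.1, hs⟩ ⟨j.1, hmem12 h1m j.2⟩ else 0)
      else B2 s ⟨j.1, hmem2 j.2 h1m⟩) with hG2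
    have hG1app : ∀ (t : Fin l1) (j : ↥I.M1), G1 t j =
        if h2m : j.1 ∈ I.M2 then
          (if ht : t.1 < r12 then B12 ⟨t.1, ht⟩ ⟨j.1, hmem12 j.2 h2m⟩ else 0)
        else
          (if ht : t.1 < r1 then B1 ⟨t.1, ht⟩ ⟨j.1, hmem1 j.2 h2m⟩ else 0) :=
      fun t j => rfl
    have hG2app : ∀ (s : Fin r2) (j : ↥I.M2), G2 s j =
        if h1m : j.1 ∈ I.M1 then
          (if hs : l1 + s.1 < r12 then B12 ⟨l1 + s.1, hs⟩ ⟨j.1, hmem12 h1m j.2⟩ else 0)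
        else B2 s ⟨j.1, hmem2 j.2 h1m⟩ := fun s j => rfl
    -- row-value formulas
    have hy1 : ∀ (tv : ℕ) (htl : tv < l1) (v : Fin m → K),
        (G1.mulVec fun j : ↥I.M1 => v j.1) ⟨tv, htl⟩
          = (∑ j : Fin m, (if hq : j ∈ Q12 then
              (if h : tv < r12 then B12 ⟨tv, h⟩ ⟨j, hq⟩ else 0) * v j else 0))
          + (∑ j : Fin m, (if hq : j ∈ Q1 then
              (if h : tv < r1 then B1 ⟨tv, h⟩ ⟨j, hq⟩ else 0) * v j else 0)) := by
      intro tv htl v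
      have e0 : (G1.mulVec fun j : ↥I.M1 => v j.1) ⟨tv, htl⟩
          = ∑ j : ↥I.M1, G1 ⟨tv, htl⟩ j * v j.1 := rfl
      rw [e0, sum_subtype_eq I.M1, ← Finset.sum_add_distrib]
      refine Finset.sum_congr rfl fun j _ => ?_
      by_cases hm1 : j ∈ I.M1
      · rw [dif_pos hm1]
        show G1 ⟨tv, htl⟩ ⟨j, hm1⟩ * v j = _
        rw [hG1app]
        by_cases hm2 : j ∈ I.M2
        · rw [dif_pos hm2, dif_pos (hmem12 hm1 hm2),
            dif_neg (fun h : j ∈ Q1 => (hQ1sub h).2 hm2), add_zero]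
        · rw [dif_neg hm2, dif_neg (fun h : j ∈ Q12 => hm2 (hQ12sub h).2),
            dif_pos (hmem1 hm1 hm2), zero_add]
      · rw [dif_neg hm1, dif_neg (fun h : j ∈ Q12 => hm1 (hQ12sub h).1),
          dif_neg (fun h : j ∈ Q1 => hm1 (hQ1sub h).1), add_zero]
    have hy2 : ∀ (sv : ℕ) (hsl : sv < r2) (v : Fin m → K),
        (G2.mulVec fun j : ↥I.M2 => v j.1) ⟨sv, hsl⟩
          = (∑ j : Fin m, (if hq : j ∈ Q12 then
              (if h : l1 + sv < r12 then B12 ⟨l1 + sv, h⟩ ⟨j, hq⟩ else 0) * v j else 0))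
          + (∑ j : Fin m, (if hq : j ∈ Q2 then B2 ⟨sv, hsl⟩ ⟨j, hq⟩ * v j else 0)) := by
      intro sv hsl v
      have e0 : (G2.mulVec fun j : ↥I.M2 => v j.1) ⟨sv, hsl⟩
          = ∑ j : ↥I.M2, G2 ⟨sv, hsl⟩ j * v j.1 := rfl
      rw [e0, sum_subtype_eq I.M2, ← Finset.sum_add_distrib]
      refine Finset.sum_congr rfl fun j _ => ?_
      by_cases hm2 : j ∈ I.M2
      · rw [dif_pos hm2]
        show G2 ⟨sv, hsl⟩ ⟨j, hm2⟩ * v j = _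
        rw [hG2app]
        by_cases hm1 : j ∈ I.M1
        · rw [dif_pos hm1, dif_pos (hmem12 hm1 hm2),
            dif_neg (fun h : j ∈ Q2 => (hQ2sub h).2 hm1), add_zero]
        · rw [dif_neg hm1, dif_neg (fun h : j ∈ Q12 => hm1 (hQ12sub h).1),
            dif_pos (hmem2 hm2 hm1), zero_add]
      · rw [dif_neg hm2, dif_neg (fun h : j ∈ Q12 => hm2 (hQ12sub h).2),
          dif_neg (fun h : j ∈ Q2 => hm2 (hQ2sub h).1), add_zero]
    refine ⟨l1, r2, G1, G2, ?_, h_sum.symm⟩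
    intro i
    have hcov : I.f i ∈ I.M1 ∪ I.M2 := by rw [I.cover]; exact Set.mem_univ _
    by_cases hm1 : I.f i ∈ I.M1 <;> by_cases hm2 : I.f i ∈ I.M2
    -- case f i ∈ P12
    · refine ⟨fun y1 y2 xs =>
        (∑ t : Fin r12, c12 ⟨i, hmem12 hm1 hm2⟩ t *
          (if hl : t.1 < l1 then
            y1 ⟨t.1, hl⟩ - ∑ j : Fin m, (if hq : j ∈ Q1 then
              (if h : t.1 < r1 then B1 ⟨t.1, h⟩ ⟨j, hq⟩ else 0)
                * xs ⟨j, hside12a i hm1 hm2 hq⟩ else 0)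
          else
            y2 ⟨t.1 - l1, by have := t.2; omega⟩
              - ∑ j : Fin m, (if hq : j ∈ Q2 then
                B2 ⟨t.1 - l1, by have := t.2; omega⟩ ⟨j, hq⟩
                  * xs ⟨j, hside12b i hm1 hm2 hq⟩ else 0)))
        - ∑ j : Fin m, (if hq : j ∈ Q12 then
            (if h : j ∈ I.χ i then A12 ⟨i, hmem12 hm1 hm2⟩ ⟨j, hq⟩ * xs ⟨j, h⟩ else 0)
          else 0), ?_⟩
      intro x
      beta_reduce
      dsimp only
      have hbr : ∀ t : Fin r12,
          (if hl : t.1 < l1 then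
            (G1.mulVec fun j : ↥I.M1 => x j.1) ⟨t.1, hl⟩
              - ∑ j : Fin m, (if hq : j ∈ Q1 then
                (if h : t.1 < r1 then B1 ⟨t.1, h⟩ ⟨j, hq⟩ else 0) * x j else 0)
          else
            (G2.mulVec fun j : ↥I.M2 => x j.1) ⟨t.1 - l1, by have := t.2; omega⟩
              - ∑ j : Fin m, (if hq : j ∈ Q2 then
                B2 ⟨t.1 - l1, by have := t.2; omega⟩ ⟨j, hq⟩ * x j else 0))
          = ∑ j : Fin m, (if hq : j ∈ Q12 then B12 t ⟨j, hq⟩ * x j else 0) := by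
        intro t
        by_cases hl : t.1 < l1
        · rw [dif_pos hl, hy1 t.1 hl x, add_sub_cancel_right]
          simp only [dif_pos t.2, Fin.eta]
        · rw [dif_neg hl, hy2 (t.1 - l1) (by have := t.2; omega) x, add_sub_cancel_right]
          have prf : l1 + (t.1 - l1) < r12 := by have := t.2; omega
          simp only [dif_pos prf]
          have het : (⟨l1 + (t.1 - l1), prf⟩ : Fin r12) = t := Fin.ext (by dsimp only; omega)
          simp only [het]
      simp only [hbr]
      exact decode_core' I.not_mem hA12c hB12 ⟨i, hmem12 hm1 hm2⟩ x
    -- case f i ∈ P1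
    · refine ⟨fun y1 y2 xs =>
        (∑ s : Fin r1, c1 ⟨i, hmem1 hm1 hm2⟩ s *
          (y1 ⟨s.1, lt_of_lt_of_le s.2 h_r1l1⟩
            - ∑ j : Fin m, (if hq : j ∈ Q12 then
              (if h : s.1 < r12 then B12 ⟨s.1, h⟩ ⟨j, hq⟩ else 0)
                * xs ⟨j, hside1 i hm1 hm2 hq⟩ else 0)))
        - ∑ j : Fin m, (if hq : j ∈ Q1 then
            (if h : j ∈ I.χ i then A1 ⟨i, hmem1 hm1 hm2⟩ ⟨j, hq⟩ * xs ⟨j, h⟩ else 0)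
          else 0), ?_⟩
      intro x
      beta_reduce
      dsimp only
      have hbr : ∀ s : Fin r1,
          (G1.mulVec fun j : ↥I.M1 => x j.1) ⟨s.1, lt_of_lt_of_le s.2 h_r1l1⟩
            - (∑ j : Fin m, (if hq : j ∈ Q12 then
                (if h : s.1 < r12 then B12 ⟨s.1, h⟩ ⟨j, hq⟩ else 0) * x j else 0))
          = ∑ j : Fin m, (if hq : j ∈ Q1 then B1 s ⟨j, hq⟩ * x j else 0) := by
        intro s
        rw [hy1 s.1 (lt_of_lt_of_le s.2 h_r1l1) x, add_sub_cancel_left]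
        simp only [dif_pos s.2, Fin.eta]
      simp only [hbr]
      exact decode_core' I.not_mem hA1c hB1 ⟨i, hmem1 hm1 hm2⟩ x
    -- case f i ∈ P2
    · refine ⟨fun y1 y2 xs =>
        (∑ s : Fin r2, c2 ⟨i, hmem2 hm2 hm1⟩ s *
          (y2 s
            - ∑ j : Fin m, (if hq : j ∈ Q12 then
              (if h : l1 + s.1 < r12 then B12 ⟨l1 + s.1, h⟩ ⟨j, hq⟩ else 0)
                * xs ⟨j, hside2 i hm2 hm1 hq⟩ else 0)))
        - ∑ j : Fin m, (if hq : j ∈ Q2 then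
            (if h : j ∈ I.χ i then A2 ⟨i, hmem2 hm2 hm1⟩ ⟨j, hq⟩ * xs ⟨j, h⟩ else 0)
          else 0), ?_⟩
      intro x
      beta_reduce
      dsimp only
      have hbr : ∀ s : Fin r2,
          (G2.mulVec fun j : ↥I.M2 => x j.1) s
            - (∑ j : Fin m, (if hq : j ∈ Q12 then
                (if h : l1 + s.1 < r12 then B12 ⟨l1 + s.1, h⟩ ⟨j, hq⟩ else 0) * x j else 0))
          = ∑ j : Fin m, (if hq : j ∈ Q2 then B2 s ⟨j, hq⟩ * x j else 0) := by
        intro s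
        rw [show (G2.mulVec fun j : ↥I.M2 => x j.1) s
            = (G2.mulVec fun j : ↥I.M2 => x j.1) ⟨s.1, s.2⟩ from rfl,
          hy2 s.1 s.2 x, add_sub_cancel_left]
      simp only [hbr]
      exact decode_core' I.not_mem hA2c hB2 ⟨i, hmem2 hm2 hm1⟩ x
    -- impossible case
    · exact absurd hcov (by intro h; cases h with
        | inl h => exact hm1 h
        | inr h => exact hm2 h)
  exact le_antisymm (Nat.sInf_le hach) (le_csInf ⟨_, hach⟩ hconv)
end
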